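/- With E, T, n, τ, g, f₀, f and the averaged interpolants f_τ^k as in the context, for every k with 1 ≤ k ≤ n−1 the per-step estimate ‖f_τ^{k+1} − f_τ^k‖² ≤ τ · ∫_{(k−1)τ}^{(k+1)τ} ‖g(s)‖² ds holds. -/

import Mathlib

/-!
Shifting the later average by `τ` writes `f_τ^{k+1} - f_τ^k` as the average over
`((k-1)τ, kτ]` of the increments `f (t + τ) - f t = ∫_t^{t+τ} g`. By Cauchy–Schwarz each
increment has squared norm at most `τ ∫_{(k-1)τ}^{(k+1)τ} ‖g‖²`, and an average of vectors
obeys any bound on their norms.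
-/

open MeasureTheory Set

section

variable {E : Type*} [NormedAddCommGroup E]

theorem sq_integral_norm_le_measureReal_mul {α : Type*} [MeasurableSpace α] {μ : Measure α}
    [IsFiniteMeasure μ] {g : α → E} (hg : MemLp g 2 μ) :
    (∫ x, ‖g x‖ ∂μ) ^ 2 ≤ μ.real univ * ∫ x, ‖g x‖ ^ 2 ∂μ := by
  have holder := integral_mul_norm_le_Lp_mul_Lq (μ := μ) (f := fun _ => (1 : ℝ))
    (g := fun x => ‖g x‖) Real.HolderConjugate.two_two
    (by simpa using memLp_const (1 : ℝ)) (by simpa using hg.norm)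
  simp only [norm_one, norm_norm, one_mul, integral_const, smul_eq_mul, one_pow, mul_one,
    Real.rpow_two, ← Real.sqrt_eq_rpow] at holder
  calc (∫ x, ‖g x‖ ∂μ) ^ 2 ≤ (√(μ.real univ) * √(∫ x, ‖g x‖ ^ 2 ∂μ)) ^ 2 :=
        pow_le_pow_left₀ (integral_nonneg fun _ => norm_nonneg _) holder 2
    _ = μ.real univ * ∫ x, ‖g x‖ ^ 2 ∂μ := by
        rw [mul_pow, Real.sq_sqrt measureReal_nonneg,
          Real.sq_sqrt (integral_nonneg fun _ => by positivity)]

variable [NormedSpace ℝ E]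

theorem norm_intervalIntegral_sq_le {g : ℝ → E} {u v : ℝ} (huv : u ≤ v)
    (hg : MemLp g 2 (volume.restrict (Ioc u v))) :
    ‖∫ s in u..v, g s‖ ^ 2 ≤ (v - u) * ∫ s in u..v, ‖g s‖ ^ 2 := by
  rw [intervalIntegral.integral_of_le huv, intervalIntegral.integral_of_le huv]
  calc ‖∫ s in Ioc u v, g s‖ ^ 2 ≤ (∫ s in Ioc u v, ‖g s‖) ^ 2 :=
        pow_le_pow_left₀ (norm_nonneg _) (norm_integral_le_integral_norm _) 2
    _ ≤ (v - u) * ∫ s in Ioc u v, ‖g s‖ ^ 2 := by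
        simpa [Real.volume_Ioc, huv] using sq_integral_norm_le_measureReal_mul hg

theorem intervalIntegral_comp_add_right_sub (f : ℝ → E) {a b c : ℝ}
    (hf : IntervalIntegrable f volume a b) (hfc : IntervalIntegrable f volume (a + c) (b + c)) :
    ∫ t in a..b, (f (t + c) - f t) = (∫ t in (a + c)..(b + c), f t) - ∫ t in a..b, f t := by
  rw [intervalIntegral.integral_sub (by simpa using hfc.comp_add_right c) hf,
    intervalIntegral.integral_comp_add_right]

theorem norm_smul_intervalIntegral_le_of_norm_le {h : ℝ → E} {u τ C : ℝ} (hτ : 0 < τ)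
    (hC : ∀ t ∈ Ioc u (u + τ), ‖h t‖ ≤ C) : ‖(1 / τ) • ∫ t in u..(u + τ), h t‖ ≤ C := by
  have hint := intervalIntegral.norm_integral_le_of_norm_le_const (by
    rwa [uIoc_of_le (by linarith)] : ∀ t ∈ uIoc u (u + τ), ‖h t‖ ≤ C)
  rw [add_sub_cancel_left, abs_of_pos hτ] at hint
  rw [norm_smul, Real.norm_of_nonneg (by positivity), one_div, inv_mul_le_iff₀ hτ]
  linarith

section Primitive

variable {g : ℝ → E} {T : ℝ} {f₀ : E} {f : ℝ → E}

theorem continuousOn_of_eq_add_integral (hg : IntegrableOn g (Ioc 0 T)) (hT : 0 ≤ T)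
    (hf : ∀ t, f t = f₀ + ∫ s in (0 : ℝ)..t, g s) : ContinuousOn f (Icc 0 T) := by
  have hprim := intervalIntegral.continuousOn_primitive_interval (a := 0) (b := T)
    (μ := volume) (f := g) (by rwa [uIcc_of_le hT, integrableOn_Icc_iff_integrableOn_Ioc])
  rw [uIcc_of_le hT] at hprim
  exact (continuousOn_const.add hprim).congr fun t _ => hf t

theorem norm_sub_sq_le_of_eq_add_integral (hg : MemLp g 2 (volume.restrict (Ioc 0 T)))
    (hf : ∀ t, f t = f₀ + ∫ s in (0 : ℝ)..t, g s) {u v : ℝ} (hu : 0 ≤ u) (huv : u ≤ v)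
    (hv : v ≤ T) : ‖f v - f u‖ ^ 2 ≤ (v - u) * ∫ s in u..v, ‖g s‖ ^ 2 := by
  have hgi : IntegrableOn g (Ioc 0 T) := hg.integrable one_le_two
  have hgi_from_zero : ∀ w, 0 ≤ w → w ≤ T → IntervalIntegrable g volume 0 w := fun w hw hwT =>
    (intervalIntegrable_iff_integrableOn_Ioc_of_le hw).2 (hgi.mono_set (Ioc_subset_Ioc le_rfl hwT))
  rw [hf, hf, add_sub_add_left_eq_sub, intervalIntegral.integral_interval_sub_left
    (hgi_from_zero v (hu.trans huv) hv) (hgi_from_zero u hu (huv.trans hv))]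
  exact norm_intervalIntegral_sq_le huv
    (hg.mono_measure (Measure.restrict_mono (Ioc_subset_Ioc hu hv) le_rfl))

theorem norm_sub_average_sq_le (hg : MemLp g 2 (volume.restrict (Ioc 0 T)))
    (hf : ∀ t, f t = f₀ + ∫ s in (0 : ℝ)..t, g s) {u τ : ℝ} (hu : 0 ≤ u) (hτ : 0 < τ)
    (huT : u + τ + τ ≤ T) :
    ‖(1 / τ) • (∫ t in (u + τ)..(u + τ + τ), f t) - (1 / τ) • ∫ t in u..(u + τ), f t‖ ^ 2
      ≤ τ * ∫ s in u..(u + τ + τ), ‖g s‖ ^ 2 := by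
  have hcont := continuousOn_of_eq_add_integral (hg.integrable one_le_two) (by linarith) hf
  have hfi : ∀ v w, 0 ≤ v → v ≤ w → w ≤ T → IntervalIntegrable f volume v w :=
    fun v w hv hvw hwT => (hcont.mono (by rw [uIcc_of_le hvw]; exact Icc_subset_Icc hv hwT))
      |>.intervalIntegrable
  have hg_sq : IntegrableOn (fun s => ‖g s‖ ^ 2) (Ioc 0 T) :=
    (memLp_two_iff_integrable_sq_norm hg.1).1 hg
  set I := ∫ s in u..(u + τ + τ), ‖g s‖ ^ 2
  have hI : 0 ≤ I := intervalIntegral.integral_nonneg (by linarith) fun _ _ => by positivity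
  have hstep : ∀ t ∈ Ioc u (u + τ), ‖f (t + τ) - f t‖ ≤ √(τ * I) := by
    intro t ht
    refine (Real.le_sqrt (norm_nonneg _) (by positivity)).2 ?_
    calc ‖f (t + τ) - f t‖ ^ 2 ≤ (t + τ - t) * ∫ s in t..(t + τ), ‖g s‖ ^ 2 :=
          norm_sub_sq_le_of_eq_add_integral hg hf (by linarith [ht.1]) (by linarith)
            (by linarith [ht.2])
      _ ≤ τ * I := by
          rw [add_sub_cancel_left]
          gcongr
          exact intervalIntegral.integral_mono_interval (by linarith [ht.1]) (by linarith)
            (by linarith [ht.2]) (.of_forall fun _ => by positivity)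
            ((intervalIntegrable_iff_integrableOn_Ioc_of_le (by linarith)).2
              (hg_sq.mono_set (Ioc_subset_Ioc hu huT)))
  rw [← smul_sub, ← intervalIntegral_comp_add_right_sub f (hfi _ _ hu (by linarith) (by linarith))
    (hfi _ _ (by linarith) (by linarith) huT)]
  refine (Real.le_sqrt (norm_nonneg _) (by positivity)).1 ?_
  exact norm_smul_intervalIntegral_le_of_norm_le hτ hstep

end Primitive

end

theorem per_step_interpolant_estimate_general
    {E : Type*} [NormedAddCommGroup E] [NormedSpace ℝ E]
    (T : ℝ) (hT : 0 < T) (n : ℕ) (τ : ℝ) (hτ : τ = T / n)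
    (g : ℝ → E) (hg_meas : StronglyMeasurable g)
    (hg_int : IntegrableOn (fun s => ‖g s‖ ^ 2) (Set.Ioc 0 T))
    (f0 : E) (f : ℝ → E) (hf : ∀ t, f t = f0 + ∫ s in (0:ℝ)..t, g s)
    (fτ : ℕ → E)
    (hfτ : ∀ k : ℕ, 1 ≤ k → k ≤ n →
      fτ k = (1 / τ) • ∫ t in (((k : ℝ) - 1) * τ)..((k : ℝ) * τ), f t) :
    ∀ k : ℕ, 1 ≤ k → k + 1 ≤ n →
      ‖fτ (k + 1) - fτ k‖ ^ 2
        ≤ τ * ∫ s in (((k : ℝ) - 1) * τ)..(((k : ℝ) + 1) * τ), ‖g s‖ ^ 2 := by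
  intro k hk hkn
  have hk' : (1 : ℝ) ≤ k := by exact_mod_cast hk
  have hkn' : (k : ℝ) + 1 ≤ n := by exact_mod_cast hkn
  have hτ_pos : 0 < τ := hτ ▸ div_pos hT (by linarith)
  have hkT : ((k : ℝ) + 1) * τ ≤ T := by
    rw [hτ, ← mul_div_assoc, div_le_iff₀ (by linarith), mul_comm T]
    exact mul_le_mul_of_nonneg_right hkn' hT.le
  have hg : MemLp g 2 (volume.restrict (Ioc 0 T)) :=
    (memLp_two_iff_integrable_sq_norm hg_meas.aestronglyMeasurable).2 hg_int
  have key := norm_sub_average_sq_le hg hf (u := ((k : ℝ) - 1) * τ)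
    (mul_nonneg (by linarith) hτ_pos.le) hτ_pos (by linarith)
  rw [show ((k : ℝ) - 1) * τ + τ = k * τ by ring,
    show (k : ℝ) * τ + τ = (k + 1) * τ by ring] at key
  rw [hfτ (k + 1) (by omega) hkn, hfτ k hk (by omega)]
  push_cast
  rwa [add_sub_cancel_right]

/-- Per-step estimate (eq. 55) in Lemma 11 of the paper:
`‖f_τ^{k+1} − f_τ^k‖² ≤ τ ∫_{(k−1)τ}^{(k+1)τ} ‖g(s)‖² ds` for `1 ≤ k ≤ n − 1`. -/
theorem per_step_interpolant_estimate
    {E : Type*} [NormedAddCommGroup E] [NormedSpace ℝ E] [CompleteSpace E]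
    (T : ℝ) (hT : 0 < T) (n : ℕ) (hn : 1 ≤ n) (τ : ℝ) (hτ : τ = T / n)
    (g : ℝ → E) (hg_meas : StronglyMeasurable g)
    (hg_int : IntegrableOn (fun s => ‖g s‖ ^ 2) (Set.Ioc 0 T))
    (f0 : E) (f : ℝ → E) (hf : ∀ t, f t = f0 + ∫ s in (0:ℝ)..t, g s)
    (fτ : ℕ → E) (hfτ0 : fτ 0 = f0)
    (hfτ : ∀ k : ℕ, 1 ≤ k → k ≤ n →
      fτ k = (1 / τ) • ∫ t in (((k : ℝ) - 1) * τ)..((k : ℝ) * τ), f t) :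
    ∀ k : ℕ, 1 ≤ k → k + 1 ≤ n →
      ‖fτ (k + 1) - fτ k‖ ^ 2
        ≤ τ * ∫ s in (((k : ℝ) - 1) * τ)..(((k : ℝ) + 1) * τ), ‖g s‖ ^ 2 :=
  per_step_interpolant_estimate_general T hT n τ hτ g hg_meas hg_int f0 f hf fτ hfτ
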